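/- Let ψ be C^2 on an open set D ⊆ ℝ² with B_ψ := 1 − ψ_x² − ψ_y² > 0, and let ρ := √(B_ψ). Suppose ψ satisfies the ZMC equation (1 − ψ_y²)ψ_xx + 2ψ_xψ_yψ_xy + (1 − ψ_x²)ψ_yy = 0. Then the 1-form η := (ψ_y/ρ) dx − (ψ_x/ρ) dy is closed on D, i.e. ∂_y(ψ_y/ρ) + ∂_x(ψ_x/ρ) = 0. -/

import Mathlib

/-- Partial derivative in the first variable of a function on ℝ². -/
noncomputable def pdx (f : ℝ × ℝ → ℝ) (p : ℝ × ℝ) : ℝ := deriv (fun t => f (t, p.2)) p.1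
/-- Partial derivative in the second variable of a function on ℝ². -/
noncomputable def pdy (f : ℝ × ℝ → ℝ) (p : ℝ × ℝ) : ℝ := deriv (fun t => f (p.1, t)) p.2

/-! Along the coordinate lines, `(ψ_x/ρ)_x = ((1 - ψ_y²) ψ_xx + ψ_x ψ_y ψ_yx) / ρ³` and
`(ψ_y/ρ)_y = ((1 - ψ_x²) ψ_yy + ψ_x ψ_y ψ_xy) / ρ³`; since `ψ_xy = ψ_yx` for a `C²` function,
the sum is the ZMC expression divided by `ρ³`. -/

open Topology

theorem HasDerivAt.div_sqrt_one_sub_sq_sub_sq {f g : ℝ → ℝ} {f' g' t : ℝ}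
    (hf : HasDerivAt f f' t) (hg : HasDerivAt g g' t) (h : 0 < 1 - f t ^ 2 - g t ^ 2) :
    HasDerivAt (fun s => f s / Real.sqrt (1 - f s ^ 2 - g s ^ 2))
      ((f' * (1 - g t ^ 2) + f t * g t * g') / Real.sqrt (1 - f t ^ 2 - g t ^ 2) ^ 3) t := by
  have hρ := (((hasDerivAt_const t (1 : ℝ)).fun_sub (hf.fun_pow 2)).fun_sub
    (hg.fun_pow 2)).sqrt h.ne'
  refine (hf.fun_div hρ (Real.sqrt_pos.2 h).ne').congr_deriv ?_
  field_simp
  rw [Real.sq_sqrt h.le]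
  push_cast
  ring

section PartialDerivatives

variable {f : ℝ × ℝ → ℝ} {p : ℝ × ℝ}

theorem DifferentiableAt.hasDerivAt_pdx (h : DifferentiableAt ℝ f p) :
    HasDerivAt (fun t => f (t, p.2)) (pdx f p) p.1 :=
  (h.comp p.1 (differentiableAt_id.prodMk (differentiableAt_const _))).hasDerivAt

theorem DifferentiableAt.hasDerivAt_pdy (h : DifferentiableAt ℝ f p) :
    HasDerivAt (fun t => f (p.1, t)) (pdy f p) p.2 :=
  (h.comp p.2 ((differentiableAt_const _).prodMk differentiableAt_id)).hasDerivAt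

theorem DifferentiableAt.pdx_eq (h : DifferentiableAt ℝ f p) :
    pdx f p = fderiv ℝ f p (1, 0) :=
  (h.hasFDerivAt.comp_hasDerivAt p.1 ((hasDerivAt_id p.1).prodMk (hasDerivAt_const p.1 p.2))).deriv

theorem DifferentiableAt.pdy_eq (h : DifferentiableAt ℝ f p) :
    pdy f p = fderiv ℝ f p (0, 1) :=
  (h.hasFDerivAt.comp_hasDerivAt p.2 ((hasDerivAt_const p.2 p.1).prodMk (hasDerivAt_id p.2))).deriv

theorem ContDiffAt.hasFDerivAt_fderiv_apply (hf : ContDiffAt ℝ 2 f p) (v : ℝ × ℝ) :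
    HasFDerivAt (fun q => fderiv ℝ f q v)
      ((ContinuousLinearMap.apply ℝ ℝ v).comp (fderiv ℝ (fderiv ℝ f) p)) p :=
  (ContinuousLinearMap.apply ℝ ℝ v).hasFDerivAt.comp p
    ((hf.fderiv_right (m := 1) le_rfl).differentiableAt one_ne_zero).hasFDerivAt

theorem ContDiffAt.pdx_eventuallyEq (hf : ContDiffAt ℝ 2 f p) :
    pdx f =ᶠ[𝓝 p] fun q => fderiv ℝ f q (1, 0) :=
  (hf.eventually (by simp)).mono fun _ hq => (hq.differentiableAt (by simp)).pdx_eq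

theorem ContDiffAt.pdy_eventuallyEq (hf : ContDiffAt ℝ 2 f p) :
    pdy f =ᶠ[𝓝 p] fun q => fderiv ℝ f q (0, 1) :=
  (hf.eventually (by simp)).mono fun _ hq => (hq.differentiableAt (by simp)).pdy_eq

theorem ContDiffAt.differentiableAt_pdx (hf : ContDiffAt ℝ 2 f p) :
    DifferentiableAt ℝ (pdx f) p :=
  ((hf.hasFDerivAt_fderiv_apply _).congr_of_eventuallyEq hf.pdx_eventuallyEq).differentiableAt

theorem ContDiffAt.differentiableAt_pdy (hf : ContDiffAt ℝ 2 f p) :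
    DifferentiableAt ℝ (pdy f) p :=
  ((hf.hasFDerivAt_fderiv_apply _).congr_of_eventuallyEq hf.pdy_eventuallyEq).differentiableAt

theorem ContDiffAt.pdy_pdx (hf : ContDiffAt ℝ 2 f p) :
    pdy (pdx f) p = fderiv ℝ (fderiv ℝ f) p (0, 1) (1, 0) := by
  rw [hf.differentiableAt_pdx.pdy_eq,
    ((hf.hasFDerivAt_fderiv_apply _).congr_of_eventuallyEq hf.pdx_eventuallyEq).fderiv]
  rfl

theorem ContDiffAt.pdx_pdy (hf : ContDiffAt ℝ 2 f p) :
    pdx (pdy f) p = fderiv ℝ (fderiv ℝ f) p (1, 0) (0, 1) := by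
  rw [hf.differentiableAt_pdy.pdx_eq,
    ((hf.hasFDerivAt_fderiv_apply _).congr_of_eventuallyEq hf.pdy_eventuallyEq).fderiv]
  rfl

theorem ContDiffAt.pdy_pdx_eq_pdx_pdy (hf : ContDiffAt ℝ 2 f p) :
    pdy (pdx f) p = pdx (pdy f) p := by
  rw [hf.pdy_pdx, hf.pdx_pdy,
    hf.isSymmSndFDerivAt (by simp [minSmoothness_of_isRCLikeNormedField])]

end PartialDerivatives

theorem stmt_18 (D : Set (ℝ × ℝ)) (hD : IsOpen D) (ψ : ℝ × ℝ → ℝ)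
    (hψ : ContDiffOn ℝ 2 ψ D)
    (hB : ∀ p ∈ D, 0 < 1 - (pdx ψ p) ^ 2 - (pdy ψ p) ^ 2)
    (hzmc : ∀ p ∈ D,
      (1 - (pdy ψ p) ^ 2) * pdx (pdx ψ) p
        + 2 * pdx ψ p * pdy ψ p * pdy (pdx ψ) p
        + (1 - (pdx ψ p) ^ 2) * pdy (pdy ψ) p = 0) :
    ∀ p ∈ D,
      pdy (fun q => pdy ψ q / Real.sqrt (1 - (pdx ψ q) ^ 2 - (pdy ψ q) ^ 2)) p
        + pdx (fun q => pdx ψ q / Real.sqrt (1 - (pdx ψ q) ^ 2 - (pdy ψ q) ^ 2)) p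
        = 0 := by
  intro p hp
  have hψp : ContDiffAt ℝ 2 ψ p := hψ.contDiffAt (hD.mem_nhds hp)
  have hu := hψp.differentiableAt_pdx
  have hv := hψp.differentiableAt_pdy
  have hswap : (fun q => pdy ψ q / Real.sqrt (1 - pdx ψ q ^ 2 - pdy ψ q ^ 2)) =
      fun q => pdy ψ q / Real.sqrt (1 - pdy ψ q ^ 2 - pdx ψ q ^ 2) := by
    funext q
    rw [sub_right_comm]
  have hy : pdy (fun q => pdy ψ q / Real.sqrt (1 - pdy ψ q ^ 2 - pdx ψ q ^ 2)) p = _ :=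
    (hv.hasDerivAt_pdy.div_sqrt_one_sub_sq_sub_sq hu.hasDerivAt_pdy
      (by rw [sub_right_comm]; exact hB p hp)).deriv
  have hx : pdx (fun q => pdx ψ q / Real.sqrt (1 - pdx ψ q ^ 2 - pdy ψ q ^ 2)) p = _ :=
    (hu.hasDerivAt_pdx.div_sqrt_one_sub_sq_sub_sq hv.hasDerivAt_pdx (hB p hp)).deriv
  rw [hswap, hy, hx]
  simp only [Prod.mk.eta]
  rw [sub_right_comm (1 : ℝ) (pdy ψ p ^ 2), ← add_div, ← hψp.pdy_pdx_eq_pdx_pdy]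
  convert zero_div _
  linear_combination hzmc p hp
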